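/- Let (A,G,α) be a C*-dynamical system, let φ = (φ_n)_{n≥1} be a sequence of ergodic G-invariant states on A, let B = ⊗_{n≥1} A be the infinite minimal tensor product with the diagonal G-action β, and let J_G(B,φ) be the set of G-invariant states ψ on B whose n-th marginal satisfies ψ(1⊗⋯⊗a⊗1⊗⋯) = φ_n(a) (a in the n-th position) for all n and all a ∈ A. If ψ ∈ J_G(B,φ) is an extreme point of J_G(B,φ), then ψ is an extreme point of S_G(B). -/

import Mathlib

open Filter Topology ComplexOrder

noncomputable section

/-- A (continuous) positive definite function on a group. -/
def IsPosDefFn {G : Type*} [Group G] (f : G → ℂ) : Prop :=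
  ∀ (n : ℕ) (g : Fin n → G) (c : Fin n → ℂ),
    0 ≤ ∑ i, ∑ j, (starRingEnd ℂ) (c i) * c j * f ((g i)⁻¹ * g j)

/-- The Haagerup property for a topological group: a sequence of continuous, normalized
positive definite functions vanishing at infinity converging to `1` uniformly on
compact subsets. -/
def HasHaagerupProperty (G : Type*) [Group G] [TopologicalSpace G] : Prop :=
  ∃ φ : ℕ → G → ℂ,
    (∀ n, Continuous (φ n) ∧ IsPosDefFn (φ n) ∧ φ n 1 = 1 ∧
      Tendsto (φ n) (cocompact G) (𝓝 0)) ∧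
    ∀ K : Set G, IsCompact K → TendstoUniformlyOn (fun n => φ n) (fun _ => 1) atTop K

section CstarDyn

variable {G : Type*} [Group G] [TopologicalSpace G]
variable {A : Type*} [NormedRing A] [StarRing A] [CStarRing A] [NormedAlgebra ℂ A]
  [StarModule ℂ A]

/-- A state on a unital C*-algebra, as a linear functional. -/
def IsStateLF (φ : A →ₗ[ℂ] ℂ) : Prop := φ 1 = 1 ∧ ∀ a : A, 0 ≤ φ (star a * a)

/-- A `G`-invariant state for an action `α` of `G` on `A`. -/
def IsInvariantState (α : G → A ≃⋆ₐ[ℂ] A) (φ : A →ₗ[ℂ] ℂ) : Prop :=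
  IsStateLF φ ∧ ∀ (g : G) (a : A), φ (α g a) = φ a

/-- A mixing `G`-invariant state: `φ(α_g(a) b) → φ(a)φ(b)` as `g → ∞`. -/
def IsMixingState (α : G → A ≃⋆ₐ[ℂ] A) (φ : A →ₗ[ℂ] ℂ) : Prop :=
  IsInvariantState α φ ∧
  ∀ a b : A, Tendsto (fun g : G => φ (α g a * b)) (cocompact G) (𝓝 (φ a * φ b))

/-- The set `S_G(A)` of `G`-invariant states. -/
def invariantStates (α : G → A ≃⋆ₐ[ℂ] A) : Set (A →ₗ[ℂ] ℂ) := {φ | IsInvariantState α φ}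

end CstarDyn

/-- The elementary product `ι 0 (x 0) * ι 1 (x 1) * ⋯ * ι (N-1) (x (N-1))` representing the
elementary tensor `x 0 ⊗ x 1 ⊗ ⋯ ⊗ x (N-1) ⊗ 1 ⊗ ⋯` in an infinite tensor product realized
through embeddings `ι n` of the factors. -/
def elemProd {A B : Type*} [NormedRing A] [StarRing A] [CStarRing A] [NormedAlgebra ℂ A]
    [StarModule ℂ A] [NormedRing B] [StarRing B] [CStarRing B] [NormedAlgebra ℂ B]
    [StarModule ℂ B] (ι : ℕ → (A →⋆ₐ[ℂ] B)) (N : ℕ) (x : ℕ → A) : B :=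
  ((List.range N).map fun i => ι i (x i)).prod

/-!
Restricting a state to the `n`-th tensor factor is an affine map sending `S_G(B)` into `S_G(A)`.
If an affine map sends a set `s` into `t`, the preimage of an extreme point of `t` meets `s` in an
extreme subset (a face) of `s`. Hence the joinings, the intersection of the preimages of the
ergodic states `φ_n`, form a face of `S_G(B)`, and extreme points of a face are extreme in `S_G(B)`.
-/

open Set

theorem IsExtreme.inter_preimage {𝕜 E F : Type*} [Ring 𝕜] [PartialOrder 𝕜] [AddRightMono 𝕜]
    [AddCommGroup E] [Module 𝕜 E] [AddCommGroup F] [Module 𝕜 F] {f : E →ᵃ[𝕜] F} {s : Set E}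
    {t u : Set F}
    (htu : IsExtreme 𝕜 t u) (hf : MapsTo f s t) : IsExtreme 𝕜 s (s ∩ f ⁻¹' u) := by
  refine ⟨inter_subset_left, fun x hx y hy z ⟨_, hzu⟩ hzxy ↦ ⟨hx, ?_⟩⟩
  have hfz : f z ∈ openSegment 𝕜 (f x) (f y) :=
    image_openSegment 𝕜 f x y ▸ mem_image_of_mem f hzxy
  exact htu.left_mem_of_mem_openSegment (hf hx) (hf hy) hzu hfz

section Marginal

variable {G : Type*}
  {A : Type*} [NormedRing A] [StarRing A] [NormedAlgebra ℂ A]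
  {B : Type*} [NormedRing B] [StarRing B] [NormedAlgebra ℂ B]

theorem IsStateLF.comp_starAlgHom {ω : B →ₗ[ℂ] ℂ} (hω : IsStateLF ω) (π : A →⋆ₐ[ℂ] B) :
    IsStateLF (ω ∘ₗ π.toLinearMap) := by
  refine ⟨?_, fun a ↦ ?_⟩
  · simpa using hω.1
  · simpa [map_star] using hω.2 (π a)

theorem IsInvariantState.comp_equivariant {α : G → A ≃⋆ₐ[ℂ] A} {β : G → B ≃⋆ₐ[ℂ] B}
    {ω : B →ₗ[ℂ] ℂ} (hω : IsInvariantState β ω) {π : A →⋆ₐ[ℂ] B}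
    (hπ : ∀ (g : G) (a : A), β g (π a) = π (α g a)) :
    IsInvariantState α (ω ∘ₗ π.toLinearMap) :=
  ⟨hω.1.comp_starAlgHom π, fun g a ↦ by simpa [hπ] using hω.2 g (π a)⟩

theorem mapsTo_lcomp_invariantStates {α : G → A ≃⋆ₐ[ℂ] A} {β : G → B ≃⋆ₐ[ℂ] B}
    {π : A →⋆ₐ[ℂ] B} (hπ : ∀ (g : G) (a : A), β g (π a) = π (α g a)) :
    MapsTo (LinearMap.lcomp ℝ ℂ π.toLinearMap) (invariantStates β) (invariantStates α) :=
  fun _ hω ↦ IsInvariantState.comp_equivariant hω hπ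

end Marginal

theorem extreme_joining_is_ergodic_general
    {G : Type*}
    {A : Type*} [NormedRing A] [StarRing A] [NormedAlgebra ℂ A]
    {B : Type*} [NormedRing B] [StarRing B] [NormedAlgebra ℂ B]
    (α : G → A ≃⋆ₐ[ℂ] A)
    (β : G → B ≃⋆ₐ[ℂ] B)
    (ι : ℕ → (A →⋆ₐ[ℂ] B))
    (hequiv : ∀ (g : G) (n : ℕ) (a : A), β g (ι n a) = ι n (α g a))
    (φs : ℕ → (A →ₗ[ℂ] ℂ))
    (herg : ∀ n, φs n ∈ Set.extremePoints ℝ (invariantStates α))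
    (ψ : B →ₗ[ℂ] ℂ)
    (hψ : ψ ∈ Set.extremePoints ℝ
      {ω : B →ₗ[ℂ] ℂ | IsInvariantState β ω ∧ ∀ (n : ℕ) (a : A), ω (ι n a) = φs n a}) :
    ψ ∈ Set.extremePoints ℝ (invariantStates β) := by
  have hfaces : IsExtreme ℝ (invariantStates β)
      (⋂ n, invariantStates β ∩ LinearMap.lcomp ℝ ℂ (ι n).toLinearMap ⁻¹' {φs n}) :=
    isExtreme_iInter fun n ↦ (isExtreme_singleton.2 (herg n)).inter_preimage
      (f := (LinearMap.lcomp ℝ ℂ (ι n).toLinearMap).toAffineMap)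
      (mapsTo_lcomp_invariantStates (hequiv · n))
  have hjoinings : {ω : B →ₗ[ℂ] ℂ | IsInvariantState β ω ∧ ∀ (n : ℕ) (a : A), ω (ι n a) = φs n a}
      = ⋂ n, invariantStates β ∩ LinearMap.lcomp ℝ ℂ (ι n).toLinearMap ⁻¹' {φs n} := by
    ext ω
    simp [invariantStates, LinearMap.ext_iff, forall_and]
  exact hfaces.extremePoints_subset_extremePoints (hjoinings ▸ hψ)

/-- **Lemma 2.4(1)**: if all `φ_n` are ergodic `G`-invariant states on `A` and `ψ` is an
extreme point of the set `J_G(B,φ)` of joinings (invariant states on the infinite minimal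
tensor product `B = ⊗_{n≥1} A` with `n`-th marginal `φ_n`), then `ψ` is an extreme point
of `S_G(B)`. -/
theorem extreme_joining_is_ergodic
    {G : Type*} [Group G] [TopologicalSpace G] [IsTopologicalGroup G]
    [LocallyCompactSpace G] [SecondCountableTopology G] [T2Space G]
    {A : Type*} [NormedRing A] [StarRing A] [CStarRing A] [NormedAlgebra ℂ A]
    [StarModule ℂ A] [CompleteSpace A] [TopologicalSpace.SeparableSpace A]
    {B : Type*} [NormedRing B] [StarRing B] [CStarRing B] [NormedAlgebra ℂ B]
    [StarModule ℂ B] [CompleteSpace B] [TopologicalSpace.SeparableSpace B]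
    (α : G → A ≃⋆ₐ[ℂ] A)
    (hα_one : ∀ a : A, α 1 a = a)
    (hα_mul : ∀ (g h : G) (a : A), α (g * h) a = α g (α h a))
    (hα_cont : ∀ a : A, Continuous fun g : G => α g a)
    (β : G → B ≃⋆ₐ[ℂ] B)
    (hβ_one : ∀ b : B, β 1 b = b)
    (hβ_mul : ∀ (g h : G) (b : B), β (g * h) b = β g (β h b))
    (hβ_cont : ∀ b : B, Continuous fun g : G => β g b)
    (ι : ℕ → (A →⋆ₐ[ℂ] B))
    (hcomm : ∀ m n : ℕ, m ≠ n → ∀ x y : A, Commute (ι m x) (ι n y))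
    (hdense : Dense
      ((Submodule.span ℂ {b : B | ∃ (N : ℕ) (x : ℕ → A), b = elemProd ι N x} :
        Submodule ℂ B) : Set B))
    (hequiv : ∀ (g : G) (n : ℕ) (a : A), β g (ι n a) = ι n (α g a))
    (φs : ℕ → (A →ₗ[ℂ] ℂ))
    (herg : ∀ n, φs n ∈ Set.extremePoints ℝ (invariantStates α))
    (ψ : B →ₗ[ℂ] ℂ)
    (hψ : ψ ∈ Set.extremePoints ℝ
      {ω : B →ₗ[ℂ] ℂ | IsInvariantState β ω ∧ ∀ (n : ℕ) (a : A), ω (ι n a) = φs n a}) :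
    ψ ∈ Set.extremePoints ℝ (invariantStates β) :=
  extreme_joining_is_ergodic_general α β ι hequiv φs herg ψ hψ
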